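/- Let F be a polynomial of the form F = x0^3 f1 + x0^2 (α x1 + f2) + x0 (x1 f3 + f4) + x1^2 f5 + x1 f6 + f7, where α ≠ 0 and f1,...,f7 are polynomials in variables x2,...,xn. Then after the substitution x1 ↦ x1 - x0 f1 - f2 + f1 f3 - f1^2 f5 (applied after rescaling so α = 1), every term of F divisible by x0^2 is eliminated except for the term x0^2 x1. -/
import Mathlib


open MvPolynomial

lemma bind₁_fix {n : ℕ} (σ : Fin (n + 2) → MvPolynomial (Fin (n + 2)) ℂ)
    (hσ : ∀ i, i ≠ 1 → σ i = X i)
    (p : MvPolynomial (Fin (n + 2)) ℂ) (hp : ∀ m ∈ p.support, m 1 = 0) :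
    bind₁ σ p = p := by
  conv_lhs => rw [p.as_sum]
  rw [map_sum]
  conv_rhs => rw [p.as_sum]
  refine Finset.sum_congr rfl fun m hm => ?_
  rw [bind₁, aeval_monomial, monomial_eq]
  congr 1
  refine Finsupp.prod_congr fun i hi => ?_
  have : i ≠ 1 := by
    intro h; subst h
    exact absurd (hp m hm) (Finsupp.mem_support_iff.mp hi)
  rw [hσ i this]

/-- Lemma on eliminating terms divisible by `x0^2` (after rescaling so that `α = 1`):
if `F = x0^3 f1 + x0^2 (x1 + f2) + x0 (x1 f3 + f4) + x1^2 f5 + x1 f6 + f7` with the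
`fᵢ` polynomials not involving `x0, x1`, then the substitution
`x1 ↦ x1 - x0 f1 - f2 + f1 f3 - f1^2 f5` turns `F` into `x0^2 x1 + G` where every
monomial of `G` has `x0`-degree at most `1`. -/
theorem stmt0 (n : ℕ) (f : Fin 7 → MvPolynomial (Fin (n + 2)) ℂ)
    (hf : ∀ i, ∀ m ∈ (f i).support, m 0 = 0 ∧ m 1 = 0)
    (F : MvPolynomial (Fin (n + 2)) ℂ)
    (hF : F = (X 0) ^ 3 * f 0 + (X 0) ^ 2 * (X 1 + f 1)
        + (X 0) * (X 1 * f 2 + f 3) + (X 1) ^ 2 * f 4 + X 1 * f 5 + f 6) :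
    ∃ G : MvPolynomial (Fin (n + 2)) ℂ,
      MvPolynomial.bind₁
        (fun i => if i = 1 then X 1 - X 0 * f 0 - f 1 + f 0 * f 2 - (f 0) ^ 2 * f 4 else X i) F
        = (X 0) ^ 2 * X 1 + G ∧ ∀ m ∈ G.support, m 0 ≤ 1 := by
  set σ : Fin (n + 2) → MvPolynomial (Fin (n + 2)) ℂ :=
    fun i => if i = 1 then X 1 - X 0 * f 0 - f 1 + f 0 * f 2 - (f 0) ^ 2 * f 4 else X i with hσ
  have hσne : ∀ i, i ≠ 1 → σ i = X i := fun i h => if_neg h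
  have hfix : ∀ i, bind₁ σ (f i) = f i := fun i =>
    bind₁_fix σ hσne (f i) (fun m hm => (hf i m hm).2)
  set A : MvPolynomial (Fin (n + 2)) ℂ := X 1 - f 1 + f 0 * f 2 - (f 0) ^ 2 * f 4 with hA
  set G : MvPolynomial (Fin (n + 2)) ℂ :=
    X 0 * (A * f 2 + f 3 - 2 * f 0 * A * f 4 - f 0 * f 5)
      + (A ^ 2 * f 4 + A * f 5 + f 6) with hG
  refine ⟨G, ?_, ?_⟩
  · have h0 : bind₁ σ (X 0 : MvPolynomial (Fin (n + 2)) ℂ) = X 0 := by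
      rw [bind₁_X_right]; exact hσne 0 (by norm_num [Fin.ext_iff])
    have h1 : bind₁ σ (X 1 : MvPolynomial (Fin (n + 2)) ℂ)
        = X 1 - X 0 * f 0 - f 1 + f 0 * f 2 - (f 0) ^ 2 * f 4 := by
      rw [bind₁_X_right]; simp [hσ]
    rw [hF]
    simp only [map_add, map_mul, map_pow, h0, h1, hfix]
    rw [hG, hA]
    ring
  · intro m hm
    have hdf : ∀ i, degreeOf 0 (f i) = 0 := by
      intro i
      rw [degreeOf_eq_sup]
      exact Nat.le_zero.mp (Finset.sup_le fun m hm => le_of_eq (hf i m hm).1)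
    have hdX1 : degreeOf 0 (X 1 : MvPolynomial (Fin (n + 2)) ℂ) = 0 := by
      rw [degreeOf_X]; simp
    have hmul : ∀ p q : MvPolynomial (Fin (n + 2)) ℂ,
        degreeOf 0 p = 0 → degreeOf 0 q = 0 → degreeOf 0 (p * q) = 0 := by
      intro p q hp hq
      have := degreeOf_mul_le 0 p q
      omega
    have hadd : ∀ p q : MvPolynomial (Fin (n + 2)) ℂ,
        degreeOf 0 p = 0 → degreeOf 0 q = 0 → degreeOf 0 (p + q) = 0 := by
      intro p q hp hq
      have := degreeOf_add_le 0 p q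
      omega
    have hsub : ∀ p q : MvPolynomial (Fin (n + 2)) ℂ,
        degreeOf 0 p = 0 → degreeOf 0 q = 0 → degreeOf 0 (p - q) = 0 := by
      intro p q hp hq
      have := degreeOf_sub_le 0 p q
      omega
    have hA0 : degreeOf 0 A = 0 := by
      rw [hA]
      refine hsub _ _ (hadd _ _ (hsub _ _ hdX1 (hdf 1)) (hmul _ _ (hdf 0) (hdf 2))) ?_
      exact hmul _ _ (by rw [pow_two]; exact hmul _ _ (hdf 0) (hdf 0)) (hdf 4)
    have hd2 : degreeOf 0 ((2 : MvPolynomial (Fin (n + 2)) ℂ)) = 0 := by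
      rw [show ((2 : MvPolynomial (Fin (n + 2)) ℂ)) = C 2 from (map_ofNat C 2).symm, degreeOf_C]
    have hP : degreeOf 0 (A * f 2 + f 3 - 2 * f 0 * A * f 4 - f 0 * f 5) = 0 := by
      refine hsub _ _ (hsub _ _ (hadd _ _ (hmul _ _ hA0 (hdf 2)) (hdf 3)) ?_) (hmul _ _ (hdf 0) (hdf 5))
      exact hmul _ _ (hmul _ _ (hmul _ _ hd2 (hdf 0)) hA0) (hdf 4)
    have hQ : degreeOf 0 (A ^ 2 * f 4 + A * f 5 + f 6) = 0 := by
      refine hadd _ _ (hadd _ _ ?_ (hmul _ _ hA0 (hdf 5))) (hdf 6)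
      exact hmul _ _ (by rw [pow_two]; exact hmul _ _ hA0 hA0) (hdf 4)
    have hdG : degreeOf 0 G ≤ 1 := by
      rw [hG]
      refine le_trans (degreeOf_add_le _ _ _) ?_
      have h1 : degreeOf 0 (X 0 * (A * f 2 + f 3 - 2 * f 0 * A * f 4 - f 0 * f 5)) ≤ 1 := by
        refine le_trans (degreeOf_mul_le _ _ _) ?_
        rw [hP, degreeOf_X]
        simp
      omega
    calc m 0 ≤ degreeOf 0 G := by
          rw [degreeOf_eq_sup]; exact Finset.le_sup (f := fun m => m 0) hm
      _ ≤ 1 := hdG
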